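/- Let R be a commutative ring and let (a_n)_{n\ge 1}, (b_n)_{n\ge 1}, (d_n)_{n\ge 1} be sequences in R. Set A = 1 + \sum_{n\ge 1} a_n Q^n, B = 1 + \sum_{n\ge 1} b_n Q^n, D = 1 + \sum_{n\ge 1} d_n Q^n in R[[Q]]. Then D is invertible in R[[Q]], and for every n \ge 1 the coefficient of Q^n in A\cdot B\cdot D^{-1} equals \sum_{l=1}^{n+1} (-1)^{l-1} \sum_{((i_1,j_1),\dots,(i_l,j_l)) \in S_l(n)} a_{i_l}\, d_{i_1-i_2}\, d_{i_2-i_3} \cdots d_{i_{l-1}-i_l}\, b_{j_1}, where by convention a_0 = b_0 = 1. -/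

import Mathlib

/-!
Write `D = 1 + x` with `x = ∑_{k ≥ 1} d_k Q^k`. Since `Q ∣ x`, the geometric series gives
`D⁻¹ ≡ ∑_{l ≤ n} (-x)^l` modulo `Q^{n+1}`, so the coefficient of `Q^n` in `A B D⁻¹` is
`∑_{l ≤ n} (-1)^l [Q^n] (A x^l B)`. Peeling off one factor `x` at a time, `[Q^n] (A x^l B)` is the
sum over chains `i_1 > ⋯ > i_{l+1}` of `a_{i_{l+1}} d_{i_1-i_2} ⋯ d_{i_l-i_{l+1}} b_{n-i_1}`; the
inequalities are strict because `x` has no constant term.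
-/

open PowerSeries Finset

/-- The set `S_l(n)` of tuples `((i_1,j_1),...,(i_l,j_l))` of pairs of nonnegative
integers with `i_1 > i_2 > ... > i_l` and `i_k + j_k = n` for all `k`. -/
def Sln (l n : ℕ) : Finset (Fin l → ℕ × ℕ) :=
  (Fintype.piFinset fun _ => Finset.range (n + 1) ×ˢ Finset.range (n + 1)).filter
    (fun f => (∀ k : Fin l, (f k).1 + (f k).2 = n) ∧
      ∀ k k' : Fin l, k < k' → (f k').1 < (f k).1)

/-- `∑_{l=1}^{n+1} (-1)^{l-1} ∑_{S_l(n)} a_{i_l} d_{i_1-i_2} ⋯ d_{i_{l-1}-i_l} b_{j_1}`. -/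
def incExcSum {R : Type*} [CommRing R] (a b d : ℕ → R) (n : ℕ) : R :=
  ∑ l ∈ Finset.range (n + 1), (-1 : R) ^ l *
    ∑ f ∈ Sln (l + 1) n,
      a (f (Fin.last l)).1 *
        (∏ k : Fin l, d ((f (Fin.castSucc k)).1 - (f (Fin.succ k)).1)) *
        b (f 0).2

lemma mem_Sln {l n : ℕ} {f : Fin l → ℕ × ℕ} :
    f ∈ Sln l n ↔ (∀ k, (f k).1 + (f k).2 = n) ∧ StrictAnti fun k => (f k).1 := by
  simp only [Sln, mem_filter, Fintype.mem_piFinset, mem_product, mem_range, StrictAnti]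
  refine ⟨fun h => h.2, fun h => ⟨fun k => ?_, h⟩⟩
  have := h.1 k
  omega

lemma cons_mem_Sln {l n : ℕ} {p : ℕ × ℕ} {g : Fin (l + 1) → ℕ × ℕ} :
    (Fin.cons p g : Fin (l + 2) → ℕ × ℕ) ∈ Sln (l + 2) n ↔
      p.1 + p.2 = n ∧ (g 0).1 < p.1 ∧ g ∈ Sln (l + 1) n := by
  simp only [mem_Sln, Fin.strictAnti_iff_succ_lt, Fin.forall_fin_succ, Fin.cons_zero,
    Fin.cons_succ, Fin.castSucc_zero, ← Fin.succ_castSucc]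
  tauto

lemma mem_Sln_one {n : ℕ} {f : Fin 1 → ℕ × ℕ} : f ∈ Sln 1 n ↔ (f 0).1 + (f 0).2 = n := by
  simp [mem_Sln, Subsingleton.strictAnti]

lemma sum_Sln_one {M : Type*} [AddCommMonoid M] (n : ℕ) (F : (Fin 1 → ℕ × ℕ) → M) :
    ∑ f ∈ Sln 1 n, F f = ∑ p ∈ antidiagonal n, F fun _ => p := by
  refine sum_nbij' (fun f => f 0) (fun p _ => p) (fun f hf => ?_) (fun p hp => ?_)
    (fun f _ => ?_) (fun p _ => rfl) (fun f _ => ?_)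
  · simpa using mem_Sln_one.mp hf
  · simpa [mem_Sln_one] using hp
  · funext k; rw [Subsingleton.elim k 0]
  · congr; funext k; rw [Subsingleton.elim k 0]

lemma mem_Sln_succ_succ {l n : ℕ} {f : Fin (l + 2) → ℕ × ℕ} :
    f ∈ Sln (l + 2) n ↔
      (f 0).1 + (f 0).2 = n ∧ (Fin.tail f 0).1 < (f 0).1 ∧ Fin.tail f ∈ Sln (l + 1) n := by
  conv_lhs => rw [← Fin.cons_self_tail f]
  exact cons_mem_Sln

lemma sum_Sln_succ_succ {M : Type*} [AddCommMonoid M] (l n : ℕ)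
    (F : (Fin (l + 2) → ℕ × ℕ) → M) :
    ∑ f ∈ Sln (l + 2) n, F f =
      ∑ g ∈ Sln (l + 1) n, ∑ i ∈ Ioc (g 0).1 n, F (Fin.cons (i, n - i) g) := by
  have cons_tail : ∀ f ∈ Sln (l + 2) n, Fin.cons ((f 0).1, n - (f 0).1) (Fin.tail f) = f := by
    intro f hf
    have := (mem_Sln_succ_succ.mp hf).1
    conv_rhs => rw [← Fin.cons_self_tail f]
    congr 1
    exact Prod.ext rfl (by simp only; omega)
  rw [sum_sigma']
  refine sum_nbij' (fun f => ⟨Fin.tail f, (f 0).1⟩) (fun p => Fin.cons (p.2, n - p.2) p.1)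
    (fun f hf => ?_) (fun p hp => ?_) cons_tail (fun p _ => ?_) (fun f hf => ?_)
  · obtain ⟨hsum, hlt, htail⟩ := mem_Sln_succ_succ.mp hf
    simp only [mem_sigma, mem_Ioc]
    exact ⟨htail, hlt, by omega⟩
  · obtain ⟨hg, hi⟩ := mem_sigma.mp hp
    rw [mem_Ioc] at hi
    exact cons_mem_Sln.mpr ⟨by omega, hi.1, hg⟩
  · simp
  · rw [cons_tail f hf]

section ChainSum

variable {R : Type*} [CommRing R]

lemma coeff_mk_sub_C_mul (d : ℕ → R) (B : R⟦X⟧) (j : ℕ) :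
    coeff j ((mk d - C (d 0)) * B) = ∑ k ∈ Ioc 0 j, d k * coeff (j - k) B := by
  rw [coeff_mul, Nat.sum_antidiagonal_eq_sum_range_succ (fun k i => coeff k _ * coeff i B),
    Nat.range_succ_eq_Icc_zero, Icc_eq_cons_Ioc (Nat.zero_le j), sum_cons]
  simp only [map_sub, coeff_mk, coeff_C, if_pos, sub_self, zero_mul, zero_add]
  refine sum_congr rfl fun k hk => ?_
  rw [if_neg (mem_Ioc.mp hk).1.ne', sub_zero]

lemma sum_Ioc_mul_coeff (d : ℕ → R) (B : R⟦X⟧) (m j : ℕ) :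
    ∑ i ∈ Ioc m (m + j), d (i - m) * coeff (m + j - i) B =
      coeff j ((mk d - C (d 0)) * B) := by
  rw [coeff_mk_sub_C_mul, show Ioc m (m + j) = (Ioc 0 j).map (addLeftEmbedding m) by simp,
    sum_map]
  simp [Nat.add_sub_add_left]

noncomputable def chainSum (a d : ℕ → R) (B : R⟦X⟧) (l n : ℕ) : R :=
  ∑ f ∈ Sln (l + 1) n,
    a (f (Fin.last l)).1 * (∏ k : Fin l, d ((f (Fin.castSucc k)).1 - (f (Fin.succ k)).1)) *
      coeff (f 0).2 B

lemma chainSum_zero (a d : ℕ → R) (B : R⟦X⟧) (n : ℕ) :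
    chainSum a d B 0 n = coeff n (mk a * B) := by
  rw [chainSum, sum_Sln_one, coeff_mul]
  simp

lemma chainSum_succ (a d : ℕ → R) (B : R⟦X⟧) (l n : ℕ) :
    chainSum a d B (l + 1) n = chainSum a d ((mk d - C (d 0)) * B) l n := by
  rw [chainSum, chainSum, sum_Sln_succ_succ]
  refine sum_congr rfl fun g hg => ?_
  have hsum : (g 0).1 + (g 0).2 = n := (mem_Sln.mp hg).1 0
  simp only [Fin.cons_last, Fin.prod_univ_succ, Fin.cons_zero, Fin.cons_succ, Fin.castSucc_zero,
    ← Fin.succ_castSucc]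
  rw [← sum_Ioc_mul_coeff, ← hsum, mul_sum]
  refine sum_congr rfl fun i _ => ?_
  ring

lemma chainSum_eq_coeff (a d : ℕ → R) (B : R⟦X⟧) (l n : ℕ) :
    chainSum a d B l n = coeff n (mk a * (mk d - C (d 0)) ^ l * B) := by
  induction l generalizing B with
  | zero => simp [chainSum_zero]
  | succ l ih => rw [chainSum_succ, ih, pow_succ]; congr 1; ring

lemma incExcSum_eq_sum_chainSum (a b d : ℕ → R) (n : ℕ) :
    incExcSum a b d n = ∑ l ∈ range (n + 1), (-1 : R) ^ l * chainSum a d (mk b) l n := by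
  simp only [incExcSum, chainSum, coeff_mk]

end ChainSum

lemma eq_sum_neg_pow_add_of_one_add_mul_eq_one {S : Type*} [CommRing S] {x e : S}
    (h : (1 + x) * e = 1) (N : ℕ) : e = ∑ l ∈ range N, (-x) ^ l + (-x) ^ N * e := by
  have geom := mul_neg_geom_sum (-x) N
  rw [sub_neg_eq_add] at geom
  linear_combination (∑ l ∈ range N, (-x) ^ l) * h - e * geom

theorem coeff_mul_mul_inv_eq_incExcSum_general {R : Type*} [CommRing R]
    (a b d : ℕ → R) (hd : d 0 = 1) :
    IsUnit (PowerSeries.mk d) ∧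
      ∀ E : PowerSeries R, PowerSeries.mk d * E = 1 →
        ∀ n : ℕ, 1 ≤ n →
          PowerSeries.coeff n (PowerSeries.mk a * PowerSeries.mk b * E) =
            incExcSum a b d n := by
  refine ⟨isUnit_iff_constantCoeff.mpr (by simp [hd]), fun E hE n _ => ?_⟩
  set x : R⟦X⟧ := mk d - C (d 0) with hx
  have hE' := eq_sum_neg_pow_add_of_one_add_mul_eq_one (x := x)
    (by rwa [hx, hd, map_one, add_sub_cancel]) (n + 1)
  have hX : (X : R⟦X⟧) ^ (n + 1) ∣ mk a * mk b * ((-x) ^ (n + 1) * E) :=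
    (dvd_mul_of_dvd_left (pow_dvd_pow_of_dvd (dvd_neg.mpr (X_dvd_iff.mpr (by simp [x]))) _)
      _).mul_left _
  rw [hE', mul_add, map_add, X_pow_dvd_iff.mp hX n (lt_add_one n), add_zero, mul_sum, map_sum,
    incExcSum_eq_sum_chainSum]
  refine sum_congr rfl fun l _ => ?_
  rw [chainSum_eq_coeff, ← hx, ← coeff_C_mul, map_pow, map_neg, map_one, neg_pow]
  congr 1
  ring

theorem coeff_mul_mul_inv_eq_incExcSum {R : Type*} [CommRing R]
    (a b d : ℕ → R) (ha : a 0 = 1) (hb : b 0 = 1) (hd : d 0 = 1) :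
    IsUnit (PowerSeries.mk d) ∧
      ∀ E : PowerSeries R, PowerSeries.mk d * E = 1 →
        ∀ n : ℕ, 1 ≤ n →
          PowerSeries.coeff n (PowerSeries.mk a * PowerSeries.mk b * E) =
            incExcSum a b d n :=
  coeff_mul_mul_inv_eq_incExcSum_general a b d hd
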